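/- Gauss-Bonnet for Euler characteristic: for any finite simple graph G, χ(G) = Σ_{x∈V} K(x), where K(x) = Σ_{k=0}^{d} (-1)^k f_{k-1}(S(x))/(k+1), with the convention f_{-1} = 1. -/

import Mathlib

open Finset
open scoped Classical

/-- Euler characteristic `χ(G) = Σ_k (-1)^k f_k`, `f_k` = number of cliques on `k+1` vertices. -/
noncomputable def eulerChar {V : Type*} [Fintype V] (G : SimpleGraph V) : ℝ :=
  ∑ k ∈ Finset.range (Fintype.card V), (-1 : ℝ) ^ k * ((G.cliqueFinset (k + 1)).card : ℝ)

/-- The unit sphere `S(x)`: the induced subgraph on the neighbors of `x`. -/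
def unitSphere {V : Type*} (G : SimpleGraph V) (x : V) : SimpleGraph (G.neighborSet x) :=
  G.induce (G.neighborSet x)

/-- The curvature `K(x) = Σ_{k≥0} (-1)^k f_{k-1}(S(x))/(k+1)` with `f_{-1} = 1`;
here `f_{k-1}(S(x))` is the number of cliques of `S(x)` on `k` vertices, and the `k = 0`
term is `(G.cliqueFinset 0).card = 1` (the empty clique). -/
noncomputable def curvature {V : Type*} [Fintype V] (G : SimpleGraph V) (x : V) : ℝ :=
  ∑ k ∈ Finset.range (Fintype.card V + 1),
    (-1 : ℝ) ^ k * (((unitSphere G x).cliqueFinset k).card : ℝ) / (k + 1)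

/-! Every `(k+1)`-clique `t` of `G` shows up, as the `k`-clique `t \ {x}`, in the unit sphere of
each of its `k+1` vertices `x`, and in no other unit sphere. Hence `Σ_x f_{k-1}(S(x)) = (k+1) f_k(G)`:
summing the curvature over all vertices turns the `k`-th term into `(-1)^k f_k(G)`, and the
alternating sum of these is `χ(G)`. -/

namespace SimpleGraph

variable {α : Type*} [Fintype α] (G : SimpleGraph α)

theorem card_cliqueFinset_induce (s : Set α) [Fintype s] (n : ℕ) :
    #((G.induce s).cliqueFinset n) = #{t ∈ G.cliqueFinset n | ↑t ⊆ s} := by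
  rw [← card_map ⟨Finset.map (Function.Embedding.subtype (· ∈ s)), Finset.map_injective _⟩]
  congr 1
  ext t
  simp only [mem_map, mem_cliqueFinset_iff, mem_filter, isNClique_induce_iff,
    Function.Embedding.coeFn_mk]
  constructor
  · rintro ⟨u, hu, rfl⟩
    exact ⟨hu, by simp⟩
  · rintro ⟨ht, hts⟩
    exact ⟨t.subtype (· ∈ s), by rwa [subtype_map_of_mem hts], subtype_map_of_mem hts⟩

theorem card_cliqueFinset_subset_neighborSet (x : α) (n : ℕ) :
    #{t ∈ G.cliqueFinset n | ↑t ⊆ G.neighborSet x} = #{t ∈ G.cliqueFinset (n + 1) | x ∈ t} := by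
  refine card_nbij' (insert x) (erase · x) ?_ ?_ ?_ ?_ <;>
    simp only [coe_filter, mem_cliqueFinset_iff]
  · rintro t ⟨ht, htx⟩
    exact ⟨ht.insert fun b hb => htx hb, mem_insert_self x t⟩
  · rintro t ⟨ht, hxt⟩
    exact ⟨ht.erase_of_mem hxt,
      fun b hb => ht.1 hxt (mem_of_mem_erase hb) (ne_of_mem_erase hb).symm⟩
  · rintro t ⟨-, htx⟩
    exact erase_insert fun hx => G.irrefl (htx hx)
  · rintro t ⟨-, hxt⟩
    exact insert_erase hxt

theorem sum_card_cliqueFinset_filter_mem (n : ℕ) :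
    ∑ x, #{t ∈ G.cliqueFinset n | x ∈ t} = n * #(G.cliqueFinset n) :=
  calc ∑ x, #{t ∈ G.cliqueFinset n | x ∈ t}
      = ∑ t ∈ G.cliqueFinset n, #{x ∈ univ | x ∈ t} :=
        sum_card_bipartiteAbove_eq_sum_card_bipartiteBelow _
    _ = ∑ t ∈ G.cliqueFinset n, n := by
        refine sum_congr rfl fun t ht => ?_
        rw [filter_mem_eq_inter, univ_inter, (mem_cliqueFinset_iff.1 ht).card_eq]
    _ = n * #(G.cliqueFinset n) := by rw [sum_const, smul_eq_mul, mul_comm]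

end SimpleGraph

section unitSphere

variable {V : Type*} [Fintype V] (G : SimpleGraph V)

theorem card_cliqueFinset_unitSphere (x : V) (k : ℕ) :
    #((unitSphere G x).cliqueFinset k) = #{t ∈ G.cliqueFinset (k + 1) | x ∈ t} := by
  rw [← G.card_cliqueFinset_subset_neighborSet]
  exact G.card_cliqueFinset_induce _ k

theorem sum_card_cliqueFinset_unitSphere (k : ℕ) :
    ∑ x, (#((unitSphere G x).cliqueFinset k) : ℝ) = (k + 1) * #(G.cliqueFinset (k + 1)) := by
  simp_rw [card_cliqueFinset_unitSphere]
  exact_mod_cast G.sum_card_cliqueFinset_filter_mem (k + 1)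

end unitSphere

/-- Gauss–Bonnet: `χ(G) = Σ_{x∈V} K(x)`. -/
theorem gauss_bonnet_euler_char {V : Type*} [Fintype V] (G : SimpleGraph V) :
    eulerChar G = ∑ x : V, curvature G x := by
  have hterm (k : ℕ) : ∑ x, (-1 : ℝ) ^ k * #((unitSphere G x).cliqueFinset k) / (k + 1) =
      (-1) ^ k * #(G.cliqueFinset (k + 1)) := by
    rw [← sum_div, ← mul_sum, sum_card_cliqueFinset_unitSphere]
    field_simp
  -- The top term of the curvature sum vanishes: `G` has no clique on more than `card V` vertices.
  have hempty : G.cliqueFinset (Fintype.card V + 1) = ∅ :=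
    SimpleGraph.cliqueFinset_eq_empty_iff.2 (G.cliqueFree_of_card_lt (Nat.lt_succ_self _))
  unfold curvature
  rw [sum_comm, sum_congr rfl fun k _ => hterm k, sum_range_succ, hempty,
    card_empty, Nat.cast_zero, mul_zero, add_zero, eulerChar]
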